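/- arXiv:1405.6258 — 5 statements merged into one kernel-verified Lean document; each statement's English description precedes it below -/
import Mathlib

section
/- Let P = (T_1, …, T_k) be a profile of hierarchies on a common finite leaf set X. If A ⊆ X is a majority cluster (cf(A) > 1/2) and B ⊆ X is a majority cluster, then A and B do not overlap; hence the set of majority clusters, together with X and all singletons, forms a hierarchy. -/
open scoped Classical

def Overlap {α : Type*} [DecidableEq α] (A B : Finset α) : Prop :=
  (A ∩ B).Nonempty ∧ A ∩ B ≠ A ∧ A ∩ B ≠ B

/-- A hierarchy on leaf set `X`: nonempty subsets of `X`, containing `X` and all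
singletons, any two members disjoint or nested. -/
def IsHierarchyOn {α : Type*} [DecidableEq α] (X : Finset α) (T : Finset (Finset α)) : Prop :=
  (∀ A ∈ T, A ⊆ X ∧ A.Nonempty) ∧ X ∈ T ∧ (∀ x ∈ X, ({x} : Finset α) ∈ T) ∧
  ∀ A ∈ T, ∀ B ∈ T, A ∩ B = ∅ ∨ A ⊆ B ∨ B ⊆ A

/-- Set-family version of a hierarchy on `X`. -/
def IsHierarchySetOn {α : Type*} [DecidableEq α] (X : Finset α) (H : Set (Finset α)) : Prop :=
  (∀ A ∈ H, A ⊆ X ∧ A.Nonempty) ∧ X ∈ H ∧ (∀ x ∈ X, ({x} : Finset α) ∈ H) ∧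
  ∀ A ∈ H, ∀ B ∈ H, A ∩ B = ∅ ∨ A ⊆ B ∨ B ⊆ A

/-- `cf(A)`: proportion of input trees containing `A` as a cluster. -/
noncomputable def cf {α : Type*} [DecidableEq α] {k : ℕ} (trees : Fin k → Finset (Finset α))
    (A : Finset α) : ℝ :=
  ((Finset.univ.filter fun i => A ∈ trees i).card : ℝ) / k

lemma cf_half {α : Type*} [DecidableEq α] {k : ℕ} (hk : 0 < k)
    (trees : Fin k → Finset (Finset α)) (A : Finset α) (h : cf trees A > 1 / 2) :
    k < 2 * (Finset.univ.filter fun i => A ∈ trees i).card := by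
  unfold cf at h
  rw [gt_iff_lt, div_lt_div_iff₀ (by norm_num) (by exact_mod_cast hk)] at h
  have : (k : ℝ) < 2 * ((Finset.univ.filter fun i => A ∈ trees i).card : ℝ) := by linarith
  exact_mod_cast this

lemma common_tree {α : Type*} [DecidableEq α] {k : ℕ} (hk : 0 < k)
    (trees : Fin k → Finset (Finset α)) (A B : Finset α)
    (hA : cf trees A > 1 / 2) (hB : cf trees B > 1 / 2) :
    ∃ i, A ∈ trees i ∧ B ∈ trees i := by
  have hA' := cf_half hk trees A hA
  have hB' := cf_half hk trees B hB
  set SA := Finset.univ.filter fun i => A ∈ trees i with hSA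
  set SB := Finset.univ.filter fun i => B ∈ trees i with hSB
  have hu : (SA ∪ SB).card ≤ k := by
    simpa using Finset.card_le_card (Finset.subset_univ (SA ∪ SB))
  have hsum : (SA ∪ SB).card + (SA ∩ SB).card = SA.card + SB.card :=
    Finset.card_union_add_card_inter SA SB
  have hpos : 0 < (SA ∩ SB).card := by omega
  obtain ⟨i, hi⟩ := Finset.card_pos.mp hpos
  simp only [SA, SB, Finset.mem_inter, Finset.mem_filter] at hi
  exact ⟨i, hi.1.2, hi.2.2⟩

/-- Two majority clusters never overlap; hence the majority clusters together with `X`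
and all singletons form a hierarchy. -/
theorem stmt_3 {α : Type*} [DecidableEq α] (X : Finset α) {k : ℕ} (hk : 0 < k)
    (trees : Fin k → Finset (Finset α)) (htrees : ∀ i, IsHierarchyOn X (trees i)) :
    (∀ A B : Finset α, cf trees A > 1 / 2 → cf trees B > 1 / 2 → ¬ Overlap A B) ∧
    IsHierarchySetOn X
      ({A | A ⊆ X ∧ cf trees A > 1 / 2} ∪ {X} ∪ {A | ∃ x ∈ X, A = {x}}) := by
  have key : ∀ A B : Finset α, cf trees A > 1 / 2 → cf trees B > 1 / 2 →
      A ∩ B = ∅ ∨ A ⊆ B ∨ B ⊆ A := by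
    intro A B hA hB
    obtain ⟨i, hAi, hBi⟩ := common_tree hk trees A B hA hB
    exact (htrees i).2.2.2 A hAi B hBi
  have noov : ∀ A B : Finset α, cf trees A > 1 / 2 → cf trees B > 1 / 2 → ¬ Overlap A B := by
    intro A B hA hB ⟨hne, hnA, hnB⟩
    rcases key A B hA hB with h | h | h
    · exact hne.ne_empty h
    · exact hnA (Finset.inter_eq_left.mpr h)
    · exact hnB (Finset.inter_eq_right.mpr h)
  refine ⟨noov, ?_, ?_, ?_, ?_⟩
  · -- subsets and nonempty
    rintro A ((⟨hAX, hcf⟩ | rfl) | ⟨x, hx, rfl⟩)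
    · refine ⟨hAX, ?_⟩
      obtain ⟨i, hAi, _⟩ := common_tree hk trees A A hcf hcf
      exact ((htrees i).1 A hAi).2
    · exact ⟨le_refl _, ((htrees ⟨0, hk⟩).1 _ (htrees ⟨0, hk⟩).2.1).2⟩
    · exact ⟨Finset.singleton_subset_iff.mpr hx, Finset.singleton_nonempty x⟩
  · exact Or.inl (Or.inr rfl)
  · intro x hx; exact Or.inr ⟨x, hx, rfl⟩
  · rintro A ((⟨hAX, hAcf⟩ | rfl) | ⟨x, hx, rfl⟩) B ((⟨hBX, hBcf⟩ | rfl) | ⟨y, hy, rfl⟩)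
    · exact key A B hAcf hBcf
    · exact Or.inr (Or.inl hAX)
    · by_cases h : y ∈ A
      · exact Or.inr (Or.inr (Finset.singleton_subset_iff.mpr h))
      · exact Or.inl (by simp [Finset.inter_singleton_of_notMem h])
    · exact Or.inr (Or.inr hBX)
    · exact Or.inr (Or.inl le_rfl)
    · exact Or.inr (Or.inr (Finset.singleton_subset_iff.mpr hy))
    · by_cases h : x ∈ B
      · exact Or.inr (Or.inl (Finset.singleton_subset_iff.mpr h))
      · exact Or.inl (by simp [Finset.singleton_inter_of_notMem h])
    · exact Or.inr (Or.inl (Finset.singleton_subset_iff.mpr hx))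
    · by_cases h : x = y
      · exact Or.inr (Or.inl (by rw [h]))
      · exact Or.inl (by simp [Finset.singleton_inter_of_notMem, h])
end

section
/- Every frequency-difference cluster is contained in every greedy consensus tree: if A is a subset of X with cf(A) > cf(B) for all B overlapping A, then any greedy consensus hierarchy (built by adding clusters in order of nonincreasing cf-value, skipping those that overlap previously accepted clusters) contains A. -/
open scoped Classical

/-- Greedy consensus: process the clusters of `L` in order, accepting a cluster iff it
overlaps no previously accepted cluster. -/
noncomputable def greedy {α : Type*} [DecidableEq α] (L : List (Finset α)) : List (Finset α) :=
  L.foldl (fun acc C => if ∀ D ∈ acc, ¬ Overlap C D then acc ++ [C] else acc) []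

namespace Greedy

variable {α : Type*} [DecidableEq α]

noncomputable def greedyFrom (acc L : List (Finset α)) : List (Finset α) :=
  L.foldl (fun acc C => if ∀ D ∈ acc, ¬ Overlap C D then acc ++ [C] else acc) acc

theorem greedy_eq_greedyFrom_nil (L : List (Finset α)) : greedy L = greedyFrom [] L := rfl

theorem greedyFrom_cons (acc : List (Finset α)) (C : Finset α) (L : List (Finset α)) :
    greedyFrom acc (C :: L) =
      greedyFrom (if ∀ D ∈ acc, ¬ Overlap C D then acc ++ [C] else acc) L := rfl

theorem acc_subset_greedyFrom (acc L : List (Finset α)) : acc ⊆ greedyFrom acc L := by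
  induction L generalizing acc with
  | nil => exact List.Subset.refl acc
  | cons C L ih =>
    rw [greedyFrom_cons]
    split_ifs
    · exact List.Subset.trans (List.subset_append_left acc [C]) (ih _)
    · exact ih acc

theorem mem_greedyFrom_of_forall_overlap_lt {β : Type*} [Preorder β] (f : Finset α → β)
    {A : Finset α} (hA : ∀ B, Overlap A B → f B < f A) :
    ∀ (acc L : List (Finset α)), L.Pairwise (fun C D => f C ≥ f D) → A ∈ L →
      (∀ D ∈ acc, ¬ Overlap A D) → A ∈ greedyFrom acc L
  | _, [], _, hAL, _ => absurd hAL List.not_mem_nil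
  | acc, C :: L, hsort, hAL, hfree => by
    rw [greedyFrom_cons]
    obtain rfl | hAL := List.mem_cons.mp hAL
    · rw [if_pos hfree]
      exact acc_subset_greedyFrom _ L (List.mem_append_right acc (List.mem_singleton_self A))
    refine mem_greedyFrom_of_forall_overlap_lt f hA _ L hsort.of_cons hAL ?_
    -- `C` precedes `A` in `L`, so `f A ≤ f C`; hence `C` cannot overlap `A`.
    have hC : ¬ Overlap A C := fun hov =>
      lt_irrefl _ ((hA C hov).trans_le (List.rel_of_pairwise_cons hsort hAL))
    split_ifs
    · simpa only [List.mem_append, List.mem_singleton, forall_eq_or_imp, or_imp,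
        forall_and, forall_eq] using ⟨hfree, hC⟩
    · exact hfree

end Greedy

open Greedy in
theorem stmt_5_general {α : Type*} [DecidableEq α] {k : ℕ}
    (trees : Fin k → Finset (Finset α))
    (L : List (Finset α))
    (hLmem : ∀ C, C ∈ L ↔ ∃ i, C ∈ trees i)
    (hLsort : L.Pairwise (fun C D => cf trees C ≥ cf trees D))
    (A : Finset α) (hAfd : ∀ B, Overlap A B → cf trees A > cf trees B)
    (hAin : ∃ i, A ∈ trees i) :
    A ∈ greedy L := by
  rw [greedy_eq_greedyFrom_nil]
  exact mem_greedyFrom_of_forall_overlap_lt (cf trees) hAfd [] L hLsort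
    ((hLmem A).2 hAin) (fun _ hD => absurd hD List.not_mem_nil)

/-- Every frequency-difference cluster belongs to every greedy consensus tree:
if `L` lists the clusters of the input trees in nonincreasing order of `cf`-value and
`A` is a cluster appearing in the input with `cf A > cf B` for all `B` overlapping `A`,
then greedy processing of `L` accepts `A`. -/
theorem stmt_5 {α : Type*} [DecidableEq α] (X : Finset α) {k : ℕ} (hk : 0 < k)
    (trees : Fin k → Finset (Finset α)) (htrees : ∀ i, IsHierarchyOn X (trees i))
    (L : List (Finset α)) (hLnd : L.Nodup)
    (hLmem : ∀ C, C ∈ L ↔ ∃ i, C ∈ trees i)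
    (hLsort : L.Pairwise (fun C D => cf trees C ≥ cf trees D))
    (A : Finset α) (hAfd : ∀ B, Overlap A B → cf trees A > cf trees B)
    (hAin : ∃ i, A ∈ trees i) :
    A ∈ greedy L :=
  stmt_5_general trees L hLmem hLsort A hAfd hAin
end

section
/- If every input tree in a profile of hierarchies on X is binary (fully resolved), then for every subset A of X with 1 < |A| < |X|, cf°(A) = 1 − cf(A); consequently the majority (+) clusters coincide exactly with the majority clusters. -/
open scoped Classical

/-- `cf°(A)`: proportion of input trees containing a cluster overlapping `A`. -/
noncomputable def cfo {α : Type*} [DecidableEq α] {k : ℕ} (trees : Fin k → Finset (Finset α))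
    (A : Finset α) : ℝ :=
  ((Finset.univ.filter fun i => ∃ B ∈ trees i, Overlap A B).card : ℝ) / k

/-- If every input tree is binary (for any `A` with `1 < |A| < |X|`, each tree contains `A`
or a cluster overlapping `A`), then `cf° A = 1 - cf A`, so the majority (+) clusters are
exactly the majority clusters. -/
theorem stmt_6 {α : Type*} [DecidableEq α] (X : Finset α) {k : ℕ} (hk : 0 < k)
    (trees : Fin k → Finset (Finset α)) (htrees : ∀ i, IsHierarchyOn X (trees i))
    (hbin : ∀ i, ∀ A ⊆ X, 1 < A.card → A.card < X.card →
      A ∈ trees i ∨ ∃ B ∈ trees i, Overlap A B) :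
    ∀ A ⊆ X, 1 < A.card → A.card < X.card →
      cfo trees A = 1 - cf trees A ∧
      (cf trees A > cfo trees A ↔ cf trees A > 1 / 2) := by
  intro A hAX h1 h2
  have hcompl : (Finset.univ.filter fun i => ∃ B ∈ trees i, Overlap A B)
      = (Finset.univ.filter fun i => A ∈ trees i)ᶜ := by
    ext i
    simp only [Finset.mem_filter, Finset.mem_compl, Finset.mem_univ, true_and]
    constructor
    · rintro ⟨B, hB, ⟨hne, h₁, h₂⟩⟩ hA
      rcases (htrees i).2.2.2 A hA B hB with h | h | h
      · exact hne.ne_empty h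
      · exact h₁ (Finset.inter_eq_left.mpr h)
      · exact h₂ (Finset.inter_eq_right.mpr h)
    · intro h
      rcases hbin i A hAX h1 h2 with h' | h'
      · exact absurd h' h
      · exact h'
  have hcard : ((Finset.univ.filter fun i => ∃ B ∈ trees i, Overlap A B).card : ℝ)
      = k - (Finset.univ.filter fun i => A ∈ trees i).card := by
    rw [hcompl, Finset.card_compl, Fintype.card_fin]
    have := Finset.card_filter_le (Finset.univ : Finset (Fin k)) (fun i => A ∈ trees i)
    push_cast [Nat.cast_sub (by simpa using this)]
    ring
  have hkpos : (0 : ℝ) < k := by exact_mod_cast hk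
  have heq : cfo trees A = 1 - cf trees A := by
    unfold cfo cf
    rw [hcard]
    field_simp
  refine ⟨heq, ?_⟩
  rw [heq]
  constructor <;> intro h <;> linarith
end

section
/- Let B_1, …, B_b be the blocks of a Steiner triple system on a 13-point set X (so b = 26), and for each block B_i let T_{i1}, T_{i2}, T_{i3} denote the three rooted binary trees on leaf set B_i. Then the map sending f : {1,…,26} → {1,2,3} to any rooted binary tree T'_f on leaf set X satisfying T'_f | B_k = T_{k f(k)} for all k cannot be injective-consistent: there is no family (T'_f) of rooted binary X-trees, indexed by all 3^26 functions f, such that T'_f | B_k = T_{k f(k)} for every k and f. (Equivalently: the map f ↦ T'_f would be injective into a set of size 23!! < 3^26, a contradiction.) -/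
/-- A rooted binary phylogenetic tree on `X`, viewed as a hierarchy: it has the maximal
number `2|X| - 1` of clusters. -/
def IsBinaryHierarchyOn {α : Type*} [DecidableEq α] (X : Finset α)
    (T : Finset (Finset α)) : Prop :=
  IsHierarchyOn X T ∧ T.card = 2 * X.card - 1

/-- Restriction `T|W` of a tree (hierarchy) to a leaf subset `W`. -/
def restrict {α : Type*} [DecidableEq α] (T : Finset (Finset α)) (W : Finset α) :
    Finset (Finset α) :=
  (T.image (· ∩ W)).filter (·.Nonempty)

open Finset hiding restrict
open Nat

variable {α : Type*} [DecidableEq α] {X W : Finset α} {T s : Finset (Finset α)} {x : α}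
  {A C D : Finset α}

lemma mem_restrict : C ∈ restrict T W ↔ (∃ D ∈ T, D ∩ W = C) ∧ C.Nonempty := by
  simp [restrict]

lemma mem_restrict_erase_iff (hTX : ∀ C ∈ T, C ⊆ X) :
    D ∈ restrict T (X.erase x) ↔ D.Nonempty ∧ x ∉ D ∧ (D ∈ T ∨ insert x D ∈ T) := by
  have hinter : ∀ C ∈ T, C ∩ X.erase x = C.erase x := fun C hC => by
    rw [inter_erase, inter_eq_left.2 (hTX C hC)]
  rw [mem_restrict]
  constructor
  · rintro ⟨⟨C, hC, rfl⟩, hne⟩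
    rw [hinter C hC] at hne ⊢
    refine ⟨hne, notMem_erase x C, ?_⟩
    by_cases hxC : x ∈ C
    · exact Or.inr (by rwa [insert_erase hxC])
    · exact Or.inl (by rwa [erase_eq_of_notMem hxC])
  · rintro ⟨hne, hxD, hD | hD⟩
    · exact ⟨⟨D, hD, by rw [hinter D hD, erase_eq_of_notMem hxD]⟩, hne⟩
    · exact ⟨⟨insert x D, hD, by rw [hinter _ hD, erase_insert hxD]⟩, hne⟩

lemma erase_nonempty_of_ne_singleton (hx : x ∈ C) (hC : C ≠ {x}) : (C.erase x).Nonempty :=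
  ((nontrivial_iff_ne_singleton hx).2 hC).erase_nonempty

namespace IsHierarchyOn

lemma eq_singleton_singleton (hT : IsHierarchyOn {x} T) : T = {{x}} :=
  eq_singleton_iff_unique_mem.2 ⟨hT.2.1, fun C hC =>
    (Nonempty.subset_singleton_iff (hT.1 C hC).2).1 (hT.1 C hC).1⟩

lemma restrict (hT : IsHierarchyOn X T) (hW : W ⊆ X) (hW₀ : W.Nonempty) :
    IsHierarchyOn W (_root_.restrict T W) := by
  obtain ⟨hsub, hX, hsingle, hlam⟩ := hT
  refine ⟨?_, ?_, ?_, ?_⟩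
  · rintro _ hC'
    obtain ⟨⟨D, -, rfl⟩, hne⟩ := mem_restrict.1 hC'
    exact ⟨inter_subset_right, hne⟩
  · exact mem_restrict.2 ⟨⟨X, hX, inter_eq_right.2 hW⟩, hW₀⟩
  · intro w hw
    exact mem_restrict.2 ⟨⟨{w}, hsingle w (hW hw), by simp [hw]⟩, singleton_nonempty w⟩
  · rintro _ hC' _ hD'
    obtain ⟨⟨C, hC, rfl⟩, -⟩ := mem_restrict.1 hC'
    obtain ⟨⟨D, hD, rfl⟩, -⟩ := mem_restrict.1 hD'
    rcases hlam C hC D hD with h | h | h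
    · left
      rw [← inter_inter_distrib_right, h, empty_inter]
    · exact Or.inr (Or.inl (inter_subset_inter_right h))
    · exact Or.inr (Or.inr (inter_subset_inter_right h))

lemma erase_mem_restrict_erase (hT : IsHierarchyOn X T) (hC : C ∈ T) (hCx : C ≠ {x}) :
    C.erase x ∈ _root_.restrict T (X.erase x) := by
  rw [mem_restrict_erase_iff fun C hC => (hT.1 C hC).1]
  refine ⟨?_, notMem_erase x C, ?_⟩
  all_goals by_cases hxC : x ∈ C
  · exact erase_nonempty_of_ne_singleton hxC hCx
  · exact (erase_eq_of_notMem hxC).symm ▸ (hT.1 C hC).2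
  · exact Or.inr (by rwa [insert_erase hxC])
  · exact Or.inl (by rwa [erase_eq_of_notMem hxC])

end IsHierarchyOn

/-- `A` is the cluster of the parent of the leaf `x`, so that `A.erase x` is the cluster of its
sibling. -/
structure IsParentCluster (T : Finset (Finset α)) (x : α) (A : Finset α) : Prop where
  mem : A ∈ T
  mem_left : x ∈ A
  ne_singleton : A ≠ {x}
  subset : ∀ C ∈ T, x ∈ C → C ≠ {x} → A ⊆ C

lemma IsHierarchyOn.exists_isParentCluster (hT : IsHierarchyOn X T) (hx : x ∈ X)
    (hX : X ≠ {x}) : ∃ A, IsParentCluster T x A := by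
  set F := T.filter fun C => x ∈ C ∧ C ≠ {x}
  have hXF : X ∈ F := mem_filter.2 ⟨hT.2.1, hx, hX⟩
  obtain ⟨A, hAF, hmin⟩ := F.exists_min_image card ⟨X, hXF⟩
  obtain ⟨hA, hxA, hAx⟩ := mem_filter.1 hAF
  refine ⟨A, hA, hxA, hAx, fun C hC hxC hCx => ?_⟩
  rcases hT.2.2.2 A hA C hC with h | h | h
  · simpa [h] using mem_inter.2 ⟨hxA, hxC⟩
  · exact h
  · exact (eq_of_subset_of_card_le h (hmin C (mem_filter.2 ⟨hC, hxC, hCx⟩))).ge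

namespace IsParentCluster

lemma eq_erase_of_subset (hT : IsHierarchyOn X T) (hA : IsParentCluster T x A) (hC : C ∈ T)
    (hxC : x ∉ C) (hAC : A.erase x ⊆ C) : C = A.erase x := by
  rcases hT.2.2.2 C hC A hA.mem with h | h | h
  · obtain ⟨a, ha⟩ := erase_nonempty_of_ne_singleton hA.mem_left hA.ne_singleton
    simpa [h] using mem_inter.2 ⟨hAC ha, mem_of_mem_erase ha⟩
  · exact Subset.antisymm (fun a ha => mem_erase.2 ⟨ne_of_mem_of_not_mem ha hxC, h ha⟩) hAC
  · exact absurd (h hA.mem_left) hxC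

lemma eq_of_erase_eq (hT : IsHierarchyOn X T) (hA : IsParentCluster T x A) (hC : C ∈ T)
    (hD : D ∈ T) (hxC : x ∈ C) (hxD : x ∉ D) (h : C.erase x = D) :
    C = A ∧ D = A.erase x := by
  have hCx : C ≠ {x} := by
    rintro rfl
    rw [erase_singleton] at h
    exact (hT.1 D hD).2.ne_empty h.symm
  have hD' : D = A.erase x :=
    hA.eq_erase_of_subset hT hD hxD (h ▸ erase_subset_erase x (hA.subset C hC hxC hCx))
  refine ⟨?_, hD'⟩
  rw [← insert_erase hxC, ← insert_erase hA.mem_left, h, hD']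

lemma injOn_erase (hT : IsHierarchyOn X T) (hA : IsParentCluster T x A) (hs : s ⊆ T)
    (hAs : A ∉ s ∨ A.erase x ∉ s) : Set.InjOn (fun C : Finset α => C.erase x) s := by
  have key : ∀ C ∈ s, ∀ D ∈ s, x ∈ C → x ∉ D → C.erase x ≠ D.erase x := by
    intro C hC D hD hxC hxD h
    rw [erase_eq_of_notMem hxD] at h
    obtain ⟨rfl, rfl⟩ := hA.eq_of_erase_eq hT (hs hC) (hs hD) hxC hxD h
    exact hAs.elim (· hC) (· hD)
  intro C hC D hD h
  by_cases hxC : x ∈ C <;> by_cases hxD : x ∈ D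
  · rw [← insert_erase hxC, ← insert_erase hxD]
    exact congrArg (insert x) h
  · exact absurd h (key C hC D hD hxC hxD)
  · exact absurd h.symm (key D hD C hC hxD hxC)
  · simpa only [erase_eq_of_notMem hxC, erase_eq_of_notMem hxD] using h

lemma card_le_card_restrict (hT : IsHierarchyOn X T) (hA : IsParentCluster T x A) (hs : s ⊆ T)
    (hxs : {x} ∉ s) (hAs : A ∉ s ∨ A.erase x ∉ s) :
    s.card ≤ (restrict T (X.erase x)).card :=
  card_le_card_of_injOn _
    (fun _ hC => hT.erase_mem_restrict_erase (hs hC) fun h => hxs (h ▸ hC))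
    (hA.injOn_erase hT hs hAs)

end IsParentCluster

namespace IsHierarchyOn

lemma card_le_card_restrict_erase_add_two (hT : IsHierarchyOn X T) (hx : x ∈ X)
    (hX : X ≠ {x}) : T.card ≤ (_root_.restrict T (X.erase x)).card + 2 := by
  obtain ⟨A, hA⟩ := hT.exists_isParentCluster hx hX
  have := hA.card_le_card_restrict hT (s := (T.erase {x}).erase A)
    ((erase_subset _ _).trans (erase_subset _ _))
    (fun h => notMem_erase _ _ (mem_of_mem_erase h)) (Or.inl (notMem_erase _ _))
  have h₁ := pred_card_le_card_erase (s := T) (a := {x})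
  have h₂ := pred_card_le_card_erase (s := T.erase {x}) (a := A)
  omega

lemma card_le (hT : IsHierarchyOn X T) : T.card ≤ 2 * X.card - 1 := by
  induction X using Finset.strongInduction generalizing T with
  | H X ih =>
  obtain ⟨x, hx⟩ := (hT.1 X hT.2.1).2
  by_cases hX : X = {x}
  · subst hX
    simp [hT.eq_singleton_singleton]
  have hX' := erase_nonempty_of_ne_singleton hx hX
  have hrestrict := ih _ (erase_ssubset hx) (hT.restrict (erase_subset x X) hX')
  have := hT.card_le_card_restrict_erase_add_two hx hX
  have := card_erase_add_one hx
  have := hX'.card_pos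
  omega

end IsHierarchyOn

namespace IsBinaryHierarchyOn

lemma restrict_erase (hT : IsBinaryHierarchyOn X T) (hx : x ∈ X) (hX : X ≠ {x}) :
    IsBinaryHierarchyOn (X.erase x) (restrict T (X.erase x)) := by
  have hX' := erase_nonempty_of_ne_singleton hx hX
  have hrestrict := hT.1.restrict (erase_subset x X) hX'
  refine ⟨hrestrict, le_antisymm hrestrict.card_le ?_⟩
  have := hT.1.card_le_card_restrict_erase_add_two hx hX
  have := card_erase_add_one hx
  have := hX'.card_pos
  have := hT.2
  omega

lemma erase_mem_of_isParentCluster (hT : IsBinaryHierarchyOn X T)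
    (hA : IsParentCluster T x A) : A.erase x ∈ T := by
  -- otherwise `C ↦ C.erase x` embeds `T.erase {x}` into the restriction to `X.erase x`,
  -- which has too few clusters
  by_contra hS
  have hX' : (X.erase x).Nonempty :=
    (erase_nonempty_of_ne_singleton hA.mem_left hA.ne_singleton).mono
      (erase_subset_erase x (hT.1.1 A hA.mem).1)
  have := hA.card_le_card_restrict hT.1 (s := T.erase {x}) (erase_subset _ _)
    (notMem_erase _ _) (Or.inr fun h => hS (mem_of_mem_erase h))
  have := (hT.1.restrict (erase_subset x X) hX').card_le
  have := pred_card_le_card_erase (s := T) (a := {x})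
  have := card_erase_add_one ((hT.1.1 A hA.mem).1 hA.mem_left)
  have := hX'.card_pos
  have := hT.2
  omega

lemma eq_insert_image_restrict (hT : IsBinaryHierarchyOn X T) (hx : x ∈ X)
    (hA : IsParentCluster T x A) :
    T = insert {x} (insert (A.erase x) ((restrict T (X.erase x)).image
      fun D => if A.erase x ⊆ D then insert x D else D)) := by
  ext C
  simp only [mem_insert, mem_image]
  constructor
  · intro hC
    by_cases hCx : C = {x}
    · exact Or.inl hCx
    right
    by_cases hxC : x ∈ C
    · refine Or.inr ⟨C.erase x, hT.1.erase_mem_restrict_erase hC hCx, ?_⟩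
      rw [if_pos (erase_subset_erase x (hA.subset C hC hxC hCx)), insert_erase hxC]
    by_cases hAC : A.erase x ⊆ C
    · exact Or.inl (hA.eq_erase_of_subset hT.1 hC hxC hAC)
    · refine Or.inr ⟨C, ?_, if_neg hAC⟩
      simpa only [erase_eq_of_notMem hxC] using hT.1.erase_mem_restrict_erase hC hCx
  · rintro (rfl | rfl | ⟨D, hD, rfl⟩)
    · exact hT.1.2.2.1 x hx
    · exact hT.erase_mem_of_isParentCluster hA
    obtain ⟨hD₀, hxD, hD | hD⟩ := (mem_restrict_erase_iff fun C hC => (hT.1.1 C hC).1).1 hD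
    · split_ifs with hAD
      · rw [hA.eq_erase_of_subset hT.1 hD hxD hAD, insert_erase hA.mem_left]
        exact hA.mem
      · exact hD
    · split_ifs with hAD
      · exact hD
      · have hne : insert x D ≠ {x} := fun h => hD₀.ne_empty <| card_eq_zero.1 <| by
          simpa [card_insert_of_notMem hxD] using congrArg card h
        exact absurd (by simpa [hxD] using erase_subset_erase x (hA.subset _ hD
          (mem_insert_self x D) hne)) hAD

end IsBinaryHierarchyOn

open Classical in
noncomputable def binaryHierarchies (X : Finset α) : Finset (Finset (Finset α)) :=
  X.powerset.powerset.filter (IsBinaryHierarchyOn X)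

lemma mem_binaryHierarchies : T ∈ binaryHierarchies X ↔ IsBinaryHierarchyOn X T := by
  simp only [binaryHierarchies, mem_filter, mem_powerset]
  exact and_iff_right_of_imp fun hT C hC => mem_powerset.2 (hT.1.1 C hC).1

lemma card_binaryHierarchies_le_mul (hx : x ∈ X) (hX : X ≠ {x}) :
    (binaryHierarchies X).card ≤
      (binaryHierarchies (X.erase x)).card * (2 * (X.erase x).card - 1) := by
  choose! A hA using fun T (hT : T ∈ binaryHierarchies X) =>
    (mem_binaryHierarchies.1 hT).1.exists_isParentCluster hx hX
  calc (binaryHierarchies X).card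
      ≤ ((binaryHierarchies (X.erase x)).sigma id).card := by
        refine card_le_card_of_injOn (fun T => ⟨restrict T (X.erase x), (A T).erase x⟩)
          (fun T hT => ?_) (fun T₁ hT₁ T₂ hT₂ h => ?_)
        · have hbin := mem_binaryHierarchies.1 hT
          exact mem_sigma.2 ⟨mem_binaryHierarchies.2 (hbin.restrict_erase hx hX),
            hbin.1.erase_mem_restrict_erase (hA T hT).mem (hA T hT).ne_singleton⟩
        · obtain ⟨h₁, h₂⟩ := Sigma.mk.inj_iff.1 h
          rw [(mem_binaryHierarchies.1 hT₁).eq_insert_image_restrict hx (hA T₁ hT₁),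
            (mem_binaryHierarchies.1 hT₂).eq_insert_image_restrict hx (hA T₂ hT₂), h₁,
            eq_of_heq h₂]
    _ = (binaryHierarchies (X.erase x)).card * (2 * (X.erase x).card - 1) := by
        rw [Finset.card_sigma, sum_const_nat]
        exact fun T hT => (mem_binaryHierarchies.1 hT).2

lemma doubleFactorial_two_mul_sub_three_mul {n : ℕ} (hn : 1 ≤ n) :
    (2 * n - 3)‼ * (2 * n - 1) = (2 * (n + 1) - 3)‼ := by
  obtain ⟨m, rfl⟩ := exists_add_of_le hn
  rcases m with _ | m
  · rfl
  · rw [show 2 * (1 + (m + 1) + 1) - 3 = 2 * m + 1 + 2 by omega, doubleFactorial_add_two,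
      show 2 * (1 + (m + 1)) - 3 = 2 * m + 1 by omega,
      show 2 * (1 + (m + 1)) - 1 = 2 * m + 1 + 2 by omega, mul_comm]

lemma card_binaryHierarchies_le (X : Finset α) :
    (binaryHierarchies X).card ≤ (2 * X.card - 3)‼ := by
  induction X using Finset.strongInduction with
  | H X ih =>
  rcases X.eq_empty_or_nonempty with rfl | ⟨x, hx⟩
  · rw [card_eq_zero.2 (eq_empty_of_forall_notMem fun T hT => ?_)]
    · exact Nat.zero_le _
    obtain ⟨⟨hsub, hX, -⟩, -⟩ := mem_binaryHierarchies.1 hT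
    exact not_nonempty_empty (hsub _ hX).2
  by_cases hX : X = {x}
  · subst hX
    refine card_le_one.2 fun T₁ hT₁ T₂ hT₂ => ?_
    rw [(mem_binaryHierarchies.1 hT₁).1.eq_singleton_singleton,
      (mem_binaryHierarchies.1 hT₂).1.eq_singleton_singleton]
  have hpos := (erase_nonempty_of_ne_singleton hx hX).card_pos
  calc (binaryHierarchies X).card
      ≤ (binaryHierarchies (X.erase x)).card * (2 * (X.erase x).card - 1) :=
        card_binaryHierarchies_le_mul hx hX
    _ ≤ (2 * (X.erase x).card - 3)‼ * (2 * (X.erase x).card - 1) :=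
        Nat.mul_le_mul_right _ (ih _ (erase_ssubset hx))
    _ = (2 * X.card - 3)‼ := by
        rw [doubleFactorial_two_mul_sub_three_mul hpos, card_erase_add_one hx]

theorem stmt_12_general (B : Fin 26 → Finset (Fin 13))
    (T : Fin 26 → Fin 3 → Finset (Finset (Fin 13)))
    (hTinj : ∀ k, Function.Injective (T k)) :
    ¬ ∃ T' : (Fin 26 → Fin 3) → Finset (Finset (Fin 13)),
      ∀ f, IsBinaryHierarchyOn Finset.univ (T' f) ∧
        ∀ k, restrict (T' f) (B k) = T k (f k) := by
  rintro ⟨T', hT'⟩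
  have hinj : Function.Injective T' := fun f g h =>
    funext fun k => hTinj k (by rw [← (hT' f).2 k, ← (hT' g).2 k, h])
  have hle := card_le_card_of_injOn (s := univ) T'
    (fun f _ => mem_binaryHierarchies.2 (hT' f).1) hinj.injOn
  have hbound := card_binaryHierarchies_le (univ : Finset (Fin 13))
  rw [Finset.card_univ, Fintype.card_fun, Fintype.card_fin, Fintype.card_fin] at hle
  rw [Finset.card_univ, Fintype.card_fin] at hbound
  have : (2 * 13 - 3)‼ < 3 ^ 26 := by norm_num [Nat.doubleFactorial]
  omega

/-- Pigeonhole obstruction: for the 26 blocks `B k` of a Steiner triple system on 13 points,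
with `T k 0, T k 1, T k 2` the three distinct rooted binary trees on leaf set `B k`,
there is no family of rooted binary trees `T' f` on all 13 points, indexed by all `3^26`
functions `f`, with `T' f | B k = T k (f k)` for every `k` (such a family would be
injective into a set of size `23!! < 3^26`). -/
theorem stmt_12 (B : Fin 26 → Finset (Fin 13))
    (hB3 : ∀ k, (B k).card = 3)
    (hSTS : ∀ p : Finset (Fin 13), p.card = 2 → ∃! k, p ⊆ B k)
    (T : Fin 26 → Fin 3 → Finset (Finset (Fin 13)))
    (hT : ∀ k j, IsBinaryHierarchyOn (B k) (T k j))
    (hTinj : ∀ k, Function.Injective (T k)) :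
    ¬ ∃ T' : (Fin 26 → Fin 3) → Finset (Finset (Fin 13)),
      ∀ f, IsBinaryHierarchyOn Finset.univ (T' f) ∧
        ∀ k, restrict (T' f) (B k) = T k (f k) :=
  stmt_12_general B T hTinj
end

section
/- If all input trees T_1, …, T_k share the same leaf set X, then for every nonempty A ⊆ X the triplet-based supertree concordance factor of A (the proportion, among trees containing at least one triple (a,a',b) with a,a' ∈ A, b ∉ A, of those trees T_i for which aa'|_i b holds for all such triples present in T_i) equals the consensus concordance factor of A (the proportion of trees containing A as a cluster). -/
def leaves {α : Type*} [DecidableEq α] (T : Finset (Finset α)) : Finset α := T.sup id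

/-- The triplet-based supertree concordance factor of `A ⊆ X`: `1` if `A = X` or `A` is a
singleton; otherwise the proportion, among trees containing some triple `(a, a', b)` with
`a, a' ∈ A` distinct and `b ∈ X ∖ A`, of those trees supporting `aa'|b` (some cluster
contains `a, a'` but not `b`) for every such triple present in the tree. -/
noncomputable def supcf {α : Type*} [DecidableEq α] (X : Finset α) {k : ℕ}
    (trees : Fin k → Finset (Finset α)) (A : Finset α) : ℝ :=
  if A = X ∨ A.card = 1 then 1
  else
    let den := Finset.univ.filter fun i : Fin k =>
      ∃ a ∈ A, ∃ a' ∈ A, ∃ b ∈ X \ A, a ≠ a' ∧ ({a, a', b} : Finset α) ⊆ leaves (trees i)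
    let num := den.filter fun i =>
      ∀ a ∈ A, ∀ a' ∈ A, ∀ b ∈ X \ A, a ≠ a' →
        ({a, a', b} : Finset α) ⊆ leaves (trees i) →
          ∃ C ∈ trees i, a ∈ C ∧ a' ∈ C ∧ b ∉ C
    if den.card = 0 then 0 else (num.card : ℝ) / den.card

namespace Finset

variable {β : Type*} [PartialOrder β] {s : Finset β}

theorem exists_isLeast_of_isChain (hs : s.Nonempty) (hc : IsChain (· ≤ ·) (s : Set β)) :
    ∃ a, IsLeast (s : Set β) a := by
  obtain ⟨a, ha⟩ := s.exists_minimal hs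
  have hdir : DirectedOn (fun x y ↦ y ≤ x) (s : Set β) := fun x hx y hy ↦
    (hc.total hx hy).elim (fun h ↦ ⟨x, hx, le_rfl, h⟩) fun h ↦ ⟨y, hy, h, le_rfl⟩
  exact ⟨a, hdir.minimal_iff_isLeast.1 ha⟩

theorem exists_isGreatest_of_isChain (hs : s.Nonempty) (hc : IsChain (· ≤ ·) (s : Set β)) :
    ∃ a, IsGreatest (s : Set β) a := by
  obtain ⟨a, ha⟩ := s.exists_maximal hs
  exact ⟨a, hc.directedOn.maximal_iff_isGreatest.1 ha⟩

end Finset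

section Laminar

variable {α : Type*} [DecidableEq α] {T F : Finset (Finset α)}

theorem isChain_of_forall_mem_of_laminar
    (hlam : ∀ A ∈ T, ∀ B ∈ T, A ∩ B = ∅ ∨ A ⊆ B ∨ B ⊆ A) (hF : F ⊆ T) {x : α}
    (hx : ∀ C ∈ F, x ∈ C) : IsChain (· ≤ ·) (F : Set (Finset α)) := by
  intro B hB C hC _
  rcases hlam B (hF hB) C (hF hC) with h | h | h
  · have : x ∈ B ∩ C := Finset.mem_inter.2 ⟨hx B hB, hx C hC⟩
    simp [h] at this
  · exact .inl h
  · exact .inr h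

end Laminar

namespace IsHierarchyOn

variable {α : Type*} [DecidableEq α] {X A : Finset α} {T : Finset (Finset α)}

/-- The least cluster `S` containing `A` lies inside `A`: for `b ∈ S ∖ A` and a fixed `a ∈ A`,
the clusters containing `a` but not `b` form a chain, and its greatest member contains all of
`A` (each `a' ∈ A` is separated from `b` together with `a`), hence contains `S ∋ b`. -/
theorem mem_of_forall_separates (hT : IsHierarchyOn X T) (hA : A ⊆ X) (hAne : A.Nonempty)
    (hsep : ∀ a ∈ A, ∀ a' ∈ A, ∀ b ∈ X \ A, a ≠ a' → ∃ C ∈ T, a ∈ C ∧ a' ∈ C ∧ b ∉ C) :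
    A ∈ T := by
  obtain ⟨hsubX, hX, hsingle, hlam⟩ := hT
  obtain ⟨a, ha⟩ := hAne
  obtain ⟨S, hS, hleast⟩ := Finset.exists_isLeast_of_isChain
    (⟨X, Finset.mem_filter.2 ⟨hX, hA⟩⟩ : (T.filter (A ⊆ ·)).Nonempty)
    (isChain_of_forall_mem_of_laminar hlam (Finset.filter_subset _ _)
      fun _ hC ↦ (Finset.mem_filter.1 hC).2 ha)
  simp only [Finset.coe_filter, Set.mem_ofPred_eq, mem_lowerBounds, and_imp] at hS hleast
  obtain ⟨hST, hAS⟩ := hS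
  suffices hSA : S ⊆ A from hSA.antisymm hAS ▸ hST
  intro b hbS
  by_contra hbA
  have hba : b ≠ a := fun h ↦ hbA (h ▸ ha)
  obtain ⟨M, hM, hgreatest⟩ := Finset.exists_isGreatest_of_isChain
    (⟨{a}, Finset.mem_filter.2 ⟨hsingle a (hA ha), by simpa using hba⟩⟩ :
      (T.filter fun C ↦ a ∈ C ∧ b ∉ C).Nonempty)
    (isChain_of_forall_mem_of_laminar hlam (Finset.filter_subset _ _)
      fun _ hC ↦ (Finset.mem_filter.1 hC).2.1)
  simp only [Finset.coe_filter, Set.mem_ofPred_eq, mem_upperBounds, and_imp] at hM hgreatest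
  obtain ⟨hMT, haM, hbM⟩ := hM
  have hAM : A ⊆ M := by
    intro a' ha'
    obtain rfl | hne := eq_or_ne a a'
    · exact haM
    obtain ⟨C, hCT, haC, ha'C, hbC⟩ :=
      hsep a ha a' ha' b (Finset.mem_sdiff.2 ⟨(hsubX S hST).1 hbS, hbA⟩) hne
    exact hgreatest C hCT haC hbC ha'C
  exact hbM (hleast M hMT hAM hbS)

end IsHierarchyOn

theorem Finset.exists_triple_of_ne_of_card_ne_one {α : Type*} [DecidableEq α] {X A : Finset α}
    (hA : A ⊆ X) (hAne : A.Nonempty) (hAX : A ≠ X) (hcard : A.card ≠ 1) :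
    ∃ a ∈ A, ∃ a' ∈ A, ∃ b ∈ X \ A, a ≠ a' ∧ ({a, a', b} : Finset α) ⊆ X := by
  obtain ⟨a, ha, a', ha', hne⟩ :=
    Finset.one_lt_card.1 ((Finset.one_le_card.2 hAne).lt_of_ne (Ne.symm hcard))
  obtain ⟨b, hbX, hbA⟩ := Finset.exists_of_ssubset (hA.ssubset_of_ne hAX)
  exact ⟨a, ha, a', ha', b, Finset.mem_sdiff.2 ⟨hbX, hbA⟩, hne,
    by simp [Finset.insert_subset_iff, hA ha, hA ha', hbX]⟩

/-- All trees have leaf set `X`, so each one contains a triple across `A` and the denominator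
of `supcf` counts all `k` trees; a tree supports every such triple iff `A` is one of its
clusters. -/
theorem stmt_18 {α : Type*} [DecidableEq α] (X : Finset α) {k : ℕ} (hk : 0 < k)
    (trees : Fin k → Finset (Finset α))
    (htrees : ∀ i, IsHierarchyOn X (trees i)) (hleaves : ∀ i, leaves (trees i) = X)
    (A : Finset α) (hA : A ⊆ X) (hAne : A.Nonempty) :
    supcf X trees A = ((Finset.univ.filter fun i => A ∈ trees i).card : ℝ) / k := by
  by_cases htriv : A = X ∨ A.card = 1
  · have hall : ∀ i, A ∈ trees i := by
      rcases htriv with rfl | hcard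
      · exact fun i ↦ (htrees i).2.1
      · obtain ⟨x, rfl⟩ := Finset.card_eq_one.1 hcard
        exact fun i ↦ (htrees i).2.2.1 x (hA (Finset.mem_singleton_self x))
    simp [supcf, htriv, hall, hk.ne']
  obtain ⟨hAX, hcard⟩ := not_or.1 htriv
  have htriple := Finset.exists_triple_of_ne_of_card_ne_one hA hAne hAX hcard
  have hsupport : ∀ i, (∀ a ∈ A, ∀ a' ∈ A, ∀ b ∈ X \ A, a ≠ a' →
      ({a, a', b} : Finset α) ⊆ X → ∃ C ∈ trees i, a ∈ C ∧ a' ∈ C ∧ b ∉ C) ↔ A ∈ trees i := by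
    refine fun i ↦ ⟨fun h ↦ (htrees i).mem_of_forall_separates hA hAne
      fun a ha a' ha' b hb hne ↦ h a ha a' ha' b hb hne ?_,
      fun h a ha a' ha' b hb _ _ ↦ ⟨A, h, ha, ha', (Finset.mem_sdiff.1 hb).2⟩⟩
    simp [Finset.insert_subset_iff, hA ha, hA ha', (Finset.mem_sdiff.1 hb).1]
  rw [supcf, if_neg htriv]
  simp only [hleaves, htriple, Finset.filter_true, hsupport, Finset.card_univ, Fintype.card_fin,
    hk.ne', if_false]
end
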